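/- arXiv:1605.00073 — 5 statements merged into one kernel-verified Lean document; each statement's English description precedes it below -/
import Mathlib

section
/- The map ι from colored pure free braid diagrams on n strands to G_n^2, sending a diagram with crossings c_1,...,c_m (ordered by height, the k-th crossing involving strands i_k and j_k) to the word a_{i_1 j_1} ··· a_{i_m j_m}, is invariant under the three Artin moves for free braids (second Reidemeister move, third Reidemeister move, and far commutativity), hence well-defined on equivalence classes of free braids. -/
abbrev GenG (n : ℕ) := {p : Fin n × Fin n // p.1 < p.2}

def relsG (n : ℕ) : Set (FreeGroup (GenG n)) :=
  {r | (∃ a : GenG n, r = .of a * .of a) ∨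
    (∃ a b : GenG n, ({a.1.1, a.1.2, b.1.1, b.1.2} : Finset (Fin n)).card = 4 ∧
      r = .of a * .of b * (.of b * .of a)⁻¹) ∨
    (∃ i j k : Fin n, ∃ hij : i < j, ∃ hik : i < k, ∃ hjk : j < k,
      r = .of ⟨(i,j),hij⟩ * .of ⟨(i,k),hik⟩ * .of ⟨(j,k),hjk⟩ *
          (.of ⟨(j,k),hjk⟩ * .of ⟨(i,k),hik⟩ * .of ⟨(i,j),hij⟩)⁻¹)}

abbrev G2 (n : ℕ) := PresentedGroup (relsG n)

inductive ArtinMove (n : ℕ) : List (GenG n) → List (GenG n) → Prop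
  | r2 (l l' : List (GenG n)) (a : GenG n) : ArtinMove n (l ++ [a, a] ++ l') (l ++ l')
  | far (l l' : List (GenG n)) (a b : GenG n)
      (h : ({a.1.1, a.1.2, b.1.1, b.1.2} : Finset (Fin n)).card = 4) :
      ArtinMove n (l ++ [a, b] ++ l') (l ++ [b, a] ++ l')
  | r3 (l l' : List (GenG n)) (i j k : Fin n) (hij : i < j) (hik : i < k) (hjk : j < k) :
      ArtinMove n (l ++ [⟨(i,j),hij⟩, ⟨(i,k),hik⟩, ⟨(j,k),hjk⟩] ++ l')
                  (l ++ [⟨(j,k),hjk⟩, ⟨(i,k),hik⟩, ⟨(i,j),hij⟩] ++ l')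

def iota (n : ℕ) (w : List (GenG n)) : G2 n := (w.map PresentedGroup.of).prod

namespace G2

variable {n : ℕ}

theorem of_mul_self (a : GenG n) : (PresentedGroup.of a : G2 n) * PresentedGroup.of a = 1 :=
  PresentedGroup.one_of_mem (Or.inl ⟨a, rfl⟩)

theorem of_mul_comm_of_card_eq_four {a b : GenG n}
    (h : ({a.1.1, a.1.2, b.1.1, b.1.2} : Finset (Fin n)).card = 4) :
    (PresentedGroup.of a : G2 n) * PresentedGroup.of b =
      PresentedGroup.of b * PresentedGroup.of a :=
  PresentedGroup.mk_eq_mk_of_mul_inv_mem (Or.inr (Or.inl ⟨a, b, h, rfl⟩))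

theorem of_mul_of_mul_of_eq {i j k : Fin n} (hij : i < j) (hik : i < k) (hjk : j < k) :
    (PresentedGroup.of ⟨(i, j), hij⟩ : G2 n) * PresentedGroup.of ⟨(i, k), hik⟩ *
        PresentedGroup.of ⟨(j, k), hjk⟩ =
      PresentedGroup.of ⟨(j, k), hjk⟩ * PresentedGroup.of ⟨(i, k), hik⟩ *
        PresentedGroup.of ⟨(i, j), hij⟩ :=
  PresentedGroup.mk_eq_mk_of_mul_inv_mem (Or.inr (Or.inr ⟨i, j, k, hij, hik, hjk, rfl⟩))

end G2

theorem iota_append {n : ℕ} (w w' : List (GenG n)) :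
    iota n (w ++ w') = iota n w * iota n w' := by
  simp only [iota, List.map_append, List.prod_append]

theorem iota_append_append_congr {n : ℕ} {u v : List (GenG n)} (huv : iota n u = iota n v)
    (l l' : List (GenG n)) : iota n (l ++ u ++ l') = iota n (l ++ v ++ l') := by
  simp only [iota_append, huv]

theorem iota_invariant (n : ℕ) (w w' : List (GenG n)) (h : ArtinMove n w w') :
    iota n w = iota n w' := by
  cases h with
  | r2 l l' a =>
    simpa using iota_append_append_congr (u := [a, a]) (v := [])
      (by simp [iota, G2.of_mul_self]) l l'
  | far l l' a b hcard =>
    exact iota_append_append_congr (by simp [iota, G2.of_mul_comm_of_card_eq_four hcard]) l l'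
  | r3 l l' i j k hij hik hjk =>
    exact iota_append_append_congr
      (by simpa [iota, mul_assoc] using G2.of_mul_of_mul_of_eq hij hik hjk) l l'
end

section
/- If two elements β and β' of G_n^2 become equal in G_{n,p}^2 under the map sending a_{ij} to a_{ij}^0, then β = β' in G_n^2. -/
abbrev GenP (n : ℕ) := GenG n × Bool

def relsP (n : ℕ) : Set (FreeGroup (GenP n)) :=
  {r | (∃ a : GenP n, r = .of a * .of a) ∨
    (∃ a b : GenG n, ∃ e₁ e₂ : Bool, ({a.1.1, a.1.2, b.1.1, b.1.2} : Finset (Fin n)).card = 4 ∧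
      r = .of (a,e₁) * .of (b,e₂) * (.of (b,e₂) * .of (a,e₁))⁻¹) ∨
    (∃ i j k : Fin n, ∃ hij : i < j, ∃ hik : i < k, ∃ hjk : j < k, ∃ e₁ e₂ e₃ : Bool,
      Bool.xor e₁ (Bool.xor e₂ e₃) = false ∧
      r = .of (⟨(i,j),hij⟩,e₁) * .of (⟨(i,k),hik⟩,e₂) * .of (⟨(j,k),hjk⟩,e₃) *
          (.of (⟨(j,k),hjk⟩,e₃) * .of (⟨(i,k),hik⟩,e₂) * .of (⟨(i,j),hij⟩,e₁))⁻¹)}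

abbrev G2p (n : ℕ) := PresentedGroup (relsP n)

/-!
Forgetting the parity labels, `a_{ij}^ε ↦ a_{ij}`, sends every defining relation of `G_{n,p}^2`
to a defining relation of `G_n^2`, so it defines a homomorphism `G_{n,p}^2 → G_n^2`. This is a
left inverse of any homomorphism sending `a_{ij}` to `a_{ij}^0`, which is therefore injective.
-/

theorem mapsTo_relsP_relsG (n : ℕ) :
    (relsP n).MapsTo (FreeGroup.map Prod.fst) (relsG n) := by
  rintro r (⟨a, rfl⟩ | ⟨a, b, e₁, e₂, hcard, rfl⟩ | ⟨i, j, k, hij, hik, hjk, e₁, e₂, e₃, -, rfl⟩)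
  · exact Or.inl ⟨a.1, by simp⟩
  · exact Or.inr (Or.inl ⟨a, b, hcard, by simp⟩)
  · exact Or.inr (Or.inr ⟨i, j, k, hij, hik, hjk, by simp⟩)

def forgetParity (n : ℕ) : G2p n →* G2 n :=
  PresentedGroup.map (FreeGroup.map Prod.fst) (mapsTo_relsP_relsG n)

theorem forgetParity_of {n : ℕ} (a : GenP n) :
    forgetParity n (PresentedGroup.of a) = PresentedGroup.of a.1 :=
  rfl

theorem forgetParity_comp_eq_id {n : ℕ} {f : G2 n →* G2p n}
    (hf : ∀ a : GenG n, f (PresentedGroup.of a) = PresentedGroup.of (a, false)) :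
    (forgetParity n).comp f = MonoidHom.id (G2 n) :=
  PresentedGroup.ext fun a => by simp [hf, forgetParity_of]

theorem eq_in_parity_implies_eq (n : ℕ) (f : G2 n →* G2p n)
    (hf : ∀ a : GenG n, f (PresentedGroup.of a) = PresentedGroup.of (a, false))
    (β β' : G2 n) (h : f β = f β') : β = β' := by
  have hleft : Function.LeftInverse (forgetParity n) f :=
    DFunLike.congr_fun (forgetParity_comp_eq_id hf)
  exact hleft.injective h
end

section
/- The map φ : G_{n,p}^2 → G_{n,d}^2 defined on generators by φ(a_{ij}^0) = a_{ij} and φ(a_{ij}^1) = τ_i a_{ij} τ_i is a well-defined group homomorphism. -/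
abbrev GenD (n : ℕ) := GenG n ⊕ Fin n

def relsD (n : ℕ) : Set (FreeGroup (GenD n)) :=
  {r | (∃ a : GenG n, r = .of (.inl a) * .of (.inl a)) ∨
    (∃ a b : GenG n, ({a.1.1, a.1.2, b.1.1, b.1.2} : Finset (Fin n)).card = 4 ∧
      r = .of (.inl a) * .of (.inl b) * (.of (.inl b) * .of (.inl a))⁻¹) ∨
    (∃ i j k : Fin n, ∃ hij : i < j, ∃ hik : i < k, ∃ hjk : j < k,
      r = .of (.inl ⟨(i,j),hij⟩) * .of (.inl ⟨(i,k),hik⟩) * .of (.inl ⟨(j,k),hjk⟩) *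
          (.of (.inl ⟨(j,k),hjk⟩) * .of (.inl ⟨(i,k),hik⟩) * .of (.inl ⟨(i,j),hij⟩))⁻¹) ∨
    (∃ i : Fin n, r = .of (.inr i) * .of (.inr i)) ∨
    (∃ i j : Fin n, i ≠ j ∧ r = .of (.inr i) * .of (.inr j) * (.of (.inr j) * .of (.inr i))⁻¹) ∨
    (∃ i j : Fin n, ∃ h : i < j,
      r = .of (.inr i) * .of (.inr j) * .of (.inl ⟨(i,j),h⟩) * .of (.inr j) * .of (.inr i) *
          (.of (.inl ⟨(i,j),h⟩))⁻¹) ∨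
    (∃ a : GenG n, ∃ k : Fin n, k ≠ a.1.1 ∧ k ≠ a.1.2 ∧
      r = .of (.inl a) * .of (.inr k) * (.of (.inr k) * .of (.inl a))⁻¹)}

abbrev G2d (n : ℕ) := PresentedGroup (relsD n)

/-! Conjugation by an involution `t` is the inner automorphism `x ↦ t x t⁻¹`, so it preserves
every relation. The images of `a_{ij}^1` are such conjugates, and the relation
`τ_i τ_j a_{ij} τ_j τ_i = a_{ij}` says that `a_{ij}` may be conjugated by `τ_i` or by `τ_j`
indifferently. In an even-parity triple relation other than the one of `G_n^2` itself, exactly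
two of the generators `a_{ij}, a_{ik}, a_{jk}` carry exponent `1`; both can then be conjugated by
the `τ` of their common index, which commutes with the third generator, so the image is a
conjugate of the triple relation of `G_n^2`. Far commutativity holds because `a_{ij}, τ_i`
commute with `a_{kl}, τ_k` for disjoint pairs. -/

section InvolutionConj

variable {G : Type*} [Group G] {t x y z : G}

theorem mul_mul_eq_conj_of_mul_self (ht : t * t = 1) (x : G) : t * x * t = MulAut.conj t x := by
  rw [MulAut.conj_apply, inv_eq_of_mul_eq_one_right ht]

theorem conj_involution_mul_self (ht : t * t = 1) (hx : x * x = 1) :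
    t * x * t * (t * x * t) = 1 := by
  rw [mul_mul_eq_conj_of_mul_self ht, ← map_mul, hx, map_one]

theorem conj_involution_triple (ht : t * t = 1) (h : x * y * z = z * y * x) :
    (t * x * t) * (t * y * t) * (t * z * t) = (t * z * t) * (t * y * t) * (t * x * t) := by
  simp only [mul_mul_eq_conj_of_mul_self ht, ← map_mul, h]

theorem conj_involution_eq_of_commute (ht : t * t = 1) (hx : Commute t x) : t * x * t = x := by
  rw [hx.eq, mul_assoc, ht, mul_one]

theorem Commute.conj_involution_left (ht : Commute t y) (hx : Commute x y) :
    Commute (t * x * t) y :=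
  (ht.mul_left hx).mul_left ht

end InvolutionConj

theorem Finset.ne_of_card_insert_four {α : Type*} [DecidableEq α] {i j k l : α}
    (h : ({i, j, k, l} : Finset α).card = 4) : i ≠ k ∧ i ≠ l ∧ j ≠ k ∧ j ≠ l := by
  refine ⟨?_, ?_, ?_, ?_⟩ <;> rintro rfl <;> grind [Finset.card_le_three]

namespace G2d

variable {n : ℕ}

def a (p : GenG n) : G2d n := PresentedGroup.of (.inl p)

def τ (i : Fin n) : G2d n := PresentedGroup.of (.inr i)

theorem a_mul_self (p : GenG n) : a p * a p = 1 :=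
  PresentedGroup.one_of_mem (Or.inl ⟨p, rfl⟩)

theorem a_commute (p q : GenG n) (h : ({p.1.1, p.1.2, q.1.1, q.1.2} : Finset (Fin n)).card = 4) :
    Commute (a p) (a q) :=
  PresentedGroup.mk_eq_mk_of_mul_inv_mem (Or.inr (Or.inl ⟨p, q, h, rfl⟩))

theorem a_triple {i j k : Fin n} (hij : i < j) (hik : i < k) (hjk : j < k) :
    a ⟨(i, j), hij⟩ * a ⟨(i, k), hik⟩ * a ⟨(j, k), hjk⟩ =
      a ⟨(j, k), hjk⟩ * a ⟨(i, k), hik⟩ * a ⟨(i, j), hij⟩ :=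
  PresentedGroup.mk_eq_mk_of_mul_inv_mem (Or.inr (Or.inr (Or.inl ⟨i, j, k, hij, hik, hjk, rfl⟩)))

theorem τ_mul_self (i : Fin n) : τ i * τ i = 1 :=
  PresentedGroup.one_of_mem (Or.inr (Or.inr (Or.inr (Or.inl ⟨i, rfl⟩))))

theorem τ_commute {i j : Fin n} (h : i ≠ j) : Commute (τ i) (τ j) :=
  PresentedGroup.mk_eq_mk_of_mul_inv_mem (Or.inr (Or.inr (Or.inr (Or.inr (Or.inl ⟨i, j, h, rfl⟩)))))

theorem τ_τ_a_τ_τ {i j : Fin n} (h : i < j) :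
    τ i * τ j * a ⟨(i, j), h⟩ * τ j * τ i = a ⟨(i, j), h⟩ :=
  PresentedGroup.mk_eq_mk_of_mul_inv_mem
    (Or.inr (Or.inr (Or.inr (Or.inr (Or.inr (Or.inl ⟨i, j, h, rfl⟩))))))

theorem a_commute_τ (p : GenG n) {k : Fin n} (h₁ : k ≠ p.1.1) (h₂ : k ≠ p.1.2) :
    Commute (a p) (τ k) :=
  PresentedGroup.mk_eq_mk_of_mul_inv_mem
    (Or.inr (Or.inr (Or.inr (Or.inr (Or.inr (Or.inr ⟨p, k, h₁, h₂, rfl⟩))))))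

theorem τ_a_τ_right_eq_left {i j : Fin n} (h : i < j) :
    τ j * a ⟨(i, j), h⟩ * τ j = τ i * a ⟨(i, j), h⟩ * τ i := by
  conv_rhs => rw [← τ_τ_a_τ_τ h]
  simp only [← mul_assoc, τ_mul_self, one_mul]
  simp only [mul_assoc, τ_mul_self, mul_one]

end G2d

open G2d

def phiGen {n : ℕ} : GenP n → G2d n
  | (p, false) => a p
  | (p, true) => τ p.1.1 * a p * τ p.1.1

section phiGen

variable {n : ℕ}

theorem phiGen_mul_self (x : GenP n) : phiGen x * phiGen x = 1 := by
  obtain ⟨p, _ | _⟩ := x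
  · exact a_mul_self p
  · exact conj_involution_mul_self (τ_mul_self _) (a_mul_self p)

theorem commute_phiGen_left {p : GenG n} {y : G2d n} (ha : Commute (a p) y)
    (hτ : Commute (τ p.1.1) y) : ∀ e, Commute (phiGen (p, e)) y
  | false => ha
  | true => hτ.conj_involution_left ha

theorem phiGen_commute {p q : GenG n}
    (h : ({p.1.1, p.1.2, q.1.1, q.1.2} : Finset (Fin n)).card = 4) (e₁ e₂ : Bool) :
    Commute (phiGen (p, e₁)) (phiGen (q, e₂)) := by
  obtain ⟨h₁, h₂, h₃, h₄⟩ := Finset.ne_of_card_insert_four h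
  refine commute_phiGen_left ?_ ?_ e₁ <;> refine (commute_phiGen_left ?_ ?_ e₂).symm
  · exact (a_commute p q h).symm
  · exact (a_commute_τ p h₁.symm h₃.symm).symm
  · exact a_commute_τ q h₁ h₂
  · exact τ_commute h₁.symm

theorem phiGen_triple {i j k : Fin n} (hij : i < j) (hik : i < k) (hjk : j < k)
    {e₁ e₂ e₃ : Bool} (he : Bool.xor e₁ (Bool.xor e₂ e₃) = false) :
    phiGen (⟨(i, j), hij⟩, e₁) * phiGen (⟨(i, k), hik⟩, e₂) * phiGen (⟨(j, k), hjk⟩, e₃) =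
      phiGen (⟨(j, k), hjk⟩, e₃) * phiGen (⟨(i, k), hik⟩, e₂) * phiGen (⟨(i, j), hij⟩, e₁) := by
  have htriple := a_triple hij hik hjk
  cases e₁ <;> cases e₂ <;> cases e₃ <;> cases he <;>
    simp only [phiGen]
  · exact htriple
  · have := conj_involution_triple (τ_mul_self k) htriple
    rwa [conj_involution_eq_of_commute (τ_mul_self k) (a_commute_τ ⟨(i, j), hij⟩ hik.ne' hjk.ne').symm,
      τ_a_τ_right_eq_left hik, τ_a_τ_right_eq_left hjk] at this
  · have := conj_involution_triple (τ_mul_self j) htriple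
    rwa [conj_involution_eq_of_commute (τ_mul_self j) (a_commute_τ ⟨(i, k), hik⟩ hij.ne' hjk.ne).symm,
      τ_a_τ_right_eq_left hij] at this
  · have := conj_involution_triple (τ_mul_self i) htriple
    rwa [conj_involution_eq_of_commute (τ_mul_self i) (a_commute_τ ⟨(j, k), hjk⟩ hij.ne hik.ne).symm] at this

theorem lift_phiGen_eq_one : ∀ r ∈ relsP n, FreeGroup.lift (phiGen (n := n)) r = 1 := by
  rintro r (⟨x, rfl⟩ | ⟨p, q, e₁, e₂, h, rfl⟩ | ⟨i, j, k, hij, hik, hjk, e₁, e₂, e₃, he, rfl⟩) <;>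
    simp only [map_mul, map_inv, FreeGroup.lift_apply_of, mul_inv_eq_one]
  · exact phiGen_mul_self x
  · exact phiGen_commute h e₁ e₂
  · exact phiGen_triple hij hik hjk he

end phiGen

theorem phi_well_defined (n : ℕ) :
    ∃ φ : G2p n →* G2d n, ∀ a : GenG n,
      φ (PresentedGroup.of (a, false)) = PresentedGroup.of (Sum.inl a) ∧
      φ (PresentedGroup.of (a, true)) =
        PresentedGroup.of (Sum.inr a.1.1) * PresentedGroup.of (Sum.inl a) *
          PresentedGroup.of (Sum.inr a.1.1) :=
  ⟨PresentedGroup.toGroup lift_phiGen_eq_one, fun _ =>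
    ⟨PresentedGroup.toGroup.of lift_phiGen_eq_one, PresentedGroup.toGroup.of lift_phiGen_eq_one⟩⟩
end

section
/- The map χ : H_{n,d}^2 → G_{n,p}^2 defined on a word T_0 a_{i_1 j_1} T_1 ⋯ T_{m-1} a_{i_m j_m} T_m (where each T_k is a product of τ's) by χ(β) = a_{i_1 j_1}^{ε_1} ⋯ a_{i_m j_m}^{ε_m}, with ε_k the sum modulo 2 of the numbers of occurrences of τ_{i_k} and τ_{j_k} in T_0,...,T_{k-1}, is well-defined (independent of the chosen word representing β). -/
def NiMap (n : ℕ) (i : Fin n) : GenD n → Multiplicative (ZMod 2) :=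
  Sum.elim (fun _ => 1) (fun k => if k = i then Multiplicative.ofAdd 1 else 1)

theorem relsD_Ni (n : ℕ) (i : Fin n) : ∀ r ∈ relsD n, FreeGroup.lift (NiMap n i) r = 1 := by
  intro r hr
  rcases hr with ⟨a,rfl⟩|⟨a,b,_,rfl⟩|⟨i',j,k,hij,hik,hjk,rfl⟩|⟨a,rfl⟩|⟨a,b,_,rfl⟩|⟨a,b,h,rfl⟩|⟨a,k,_,_,rfl⟩ <;>
    simp only [map_mul, map_inv, FreeGroup.lift_apply_of, NiMap, Sum.elim_inl, Sum.elim_inr] <;>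
    first
      | (split_ifs <;> decide)
      | decide

def Ni (n : ℕ) (i : Fin n) : G2d n →* Multiplicative (ZMod 2) :=
  PresentedGroup.toGroup (relsD_Ni n i)

def Hsub (n : ℕ) : Subgroup (G2d n) := ⨅ i : Fin n, (Ni n i).ker

def wordProd (n : ℕ) (w : List (GenD n)) : G2d n := (w.map PresentedGroup.of).prod

def chiWord {n : ℕ} : List (GenD n) → (Fin n → Bool) → G2p n
  | [], _ => 1
  | Sum.inl a :: t, c => PresentedGroup.of (a, Bool.xor (c a.1.1) (c a.1.2)) * chiWord t c
  | Sum.inr i :: t, c => chiWord t (Function.update c i (!c i))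

/-!
Reading a word from left to right, `χ` keeps a colouring `c : Fin n → Bool` recording the
parities of the `τ`'s read so far: `τ_i` flips `c i`, and `a_{ij}` emits `a_{ij}^{c i + c j}`.
This reading is a homomorphism from the free group into the permutational wreath product
`((Fin n → Bool) → G_{n,p}^2) ⋊ Perm (Fin n → Bool)`, and the relations of `G_{n,d}^2` hold there:
the triple relation because the three exponents of a triangle sum to `0`, the mixed relations
because flipping both ends of `a_{ij}`, or a vertex off it, leaves its exponent unchanged.
So it factors through `G_{n,d}^2`, and `χ β` is the component at the zero colouring of the image
of `β`.
-/

open SemidirectProduct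

section PermWreath

variable {X G : Type*} [Group G]

lemma mulAutArrow_perm_apply (σ : Equiv.Perm X) (f : X → G) (x : X) :
    mulAutArrow σ f x = f (σ⁻¹ x) :=
  rfl

lemma left_inl_mul (f : X → G) (k : (X → G) ⋊[mulAutArrow] Equiv.Perm X) (x : X) :
    (inl f * k).left x = f x * k.left x := by
  simp

lemma left_inr_mul (σ : Equiv.Perm X) (k : (X → G) ⋊[mulAutArrow] Equiv.Perm X) (x : X) :
    (inr σ * k).left x = k.left (σ⁻¹ x) := by
  rw [mul_left, left_inr, one_mul, right_inr, mulAutArrow_perm_apply]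

lemma inr_mul_inl_mul_inr_inv {f : X → G} {σ : Equiv.Perm X} (h : ∀ x, f (σ x) = f x) :
    (inr σ * inl f * inr σ⁻¹ : (X → G) ⋊[mulAutArrow] Equiv.Perm X) = inl f := by
  have hf : mulAutArrow σ f = f := funext fun x =>
    (h (σ⁻¹ x)).symm.trans (congrArg f (σ.apply_symm_apply x))
  rw [← inl_aut, hf]

lemma commute_inl_inr {f : X → G} {σ : Equiv.Perm X} (h : ∀ x, f (σ x) = f x) :
    Commute (inl f : (X → G) ⋊[mulAutArrow] Equiv.Perm X) (inr σ) := by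
  have := inr_mul_inl_mul_inr_inv h
  rwa [map_inv, mul_inv_eq_iff_eq_mul, eq_comm] at this

end PermWreath

section RelsP

variable {n : ℕ}

lemma ofP_mul_self (x : GenP n) : (PresentedGroup.of x : G2p n) * PresentedGroup.of x = 1 :=
  PresentedGroup.one_of_mem (Or.inl ⟨x, rfl⟩)

lemma ofP_commute {a b : GenG n} (e₁ e₂ : Bool)
    (h : ({a.1.1, a.1.2, b.1.1, b.1.2} : Finset (Fin n)).card = 4) :
    Commute (PresentedGroup.of (a, e₁) : G2p n) (PresentedGroup.of (b, e₂)) :=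
  PresentedGroup.mk_eq_mk_of_mul_inv_mem (Or.inr (Or.inl ⟨a, b, e₁, e₂, h, rfl⟩))

lemma ofP_triple {i j k : Fin n} (hij : i < j) (hik : i < k) (hjk : j < k)
    {e₁ e₂ e₃ : Bool} (he : Bool.xor e₁ (Bool.xor e₂ e₃) = false) :
    (PresentedGroup.of (⟨(i,j),hij⟩,e₁) : G2p n) * PresentedGroup.of (⟨(i,k),hik⟩,e₂) *
        PresentedGroup.of (⟨(j,k),hjk⟩,e₃) =
      PresentedGroup.of (⟨(j,k),hjk⟩,e₃) * PresentedGroup.of (⟨(i,k),hik⟩,e₂) *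
        PresentedGroup.of (⟨(i,j),hij⟩,e₁) :=
  PresentedGroup.mk_eq_mk_of_mul_inv_mem
    (Or.inr (Or.inr ⟨i, j, k, hij, hik, hjk, e₁, e₂, e₃, he, rfl⟩))

end RelsP

section Colouring

variable {n : ℕ}

def flipAt (i : Fin n) : Equiv.Perm (Fin n → Bool) :=
  Function.Involutive.toPerm (fun c => Function.update c i (!c i)) fun c => by simp

lemma flipAt_apply (i : Fin n) (c : Fin n → Bool) :
    flipAt i c = Function.update c i (!c i) :=
  rfl

lemma flipAt_inv (i : Fin n) : (flipAt i)⁻¹ = flipAt i :=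
  Function.Involutive.toPerm_symm _

lemma flipAt_mul_self (i : Fin n) : flipAt i * flipAt i = 1 := by
  nth_rw 1 [← flipAt_inv]
  exact inv_mul_cancel _

lemma flipAt_commute (i j : Fin n) : Commute (flipAt i) (flipAt j) := by
  rcases eq_or_ne i j with rfl | hij
  · rfl
  refine Equiv.ext fun c => ?_
  simp only [Equiv.Perm.mul_apply, flipAt_apply, Function.update_of_ne hij,
    Function.update_of_ne hij.symm]
  exact Function.update_comm hij.symm _ _ _

def edgeParity (a : GenG n) (c : Fin n → Bool) : Bool := Bool.xor (c a.1.1) (c a.1.2)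

def edgeLetter (a : GenG n) (c : Fin n → Bool) : G2p n := PresentedGroup.of (a, edgeParity a c)

lemma edgeLetter_flipAt_of_ne (a : GenG n) {k : Fin n} (h₁ : k ≠ a.1.1) (h₂ : k ≠ a.1.2)
    (c : Fin n → Bool) : edgeLetter a (flipAt k c) = edgeLetter a c := by
  simp [edgeLetter, edgeParity, flipAt_apply, Function.update_of_ne h₁.symm,
    Function.update_of_ne h₂.symm]

lemma edgeLetter_flipAt_flipAt (a : GenG n) (c : Fin n → Bool) :
    edgeLetter a (flipAt a.1.1 (flipAt a.1.2 c)) = edgeLetter a c := by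
  simp [edgeLetter, edgeParity, flipAt_apply, a.2.ne, a.2.ne']

lemma edgeParity_triple {i j k : Fin n} (hij : i < j) (hik : i < k) (hjk : j < k)
    (c : Fin n → Bool) :
    Bool.xor (edgeParity ⟨(i,j),hij⟩ c)
      (Bool.xor (edgeParity ⟨(i,k),hik⟩ c) (edgeParity ⟨(j,k),hjk⟩ c)) = false := by
  simp only [edgeParity]
  cases c i <;> cases c j <;> cases c k <;> rfl

end Colouring

section Chi

variable {n : ℕ}

abbrev ParityWreath (n : ℕ) :=
  ((Fin n → Bool) → G2p n) ⋊[mulAutArrow] Equiv.Perm (Fin n → Bool)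

def chiGen : GenD n → ParityWreath n
  | .inl a => inl (edgeLetter a)
  | .inr i => inr (flipAt i)

lemma chiGen_rels : ∀ r ∈ relsD n, FreeGroup.lift chiGen r = 1 := by
  rintro r (⟨a, rfl⟩ | ⟨a, b, hab, rfl⟩ | ⟨i, j, k, hij, hik, hjk, rfl⟩ | ⟨i, rfl⟩ |
    ⟨i, j, -, rfl⟩ | ⟨i, j, hij, rfl⟩ | ⟨a, k, hk₁, hk₂, rfl⟩) <;>
    simp only [map_mul, map_inv, FreeGroup.lift_apply_of, chiGen, mul_inv_eq_one]
  · rw [← map_mul, ← map_one inl]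
    exact congrArg inl (funext fun _ => ofP_mul_self _)
  · simp only [← map_mul]
    exact congrArg inl (funext fun _ => (ofP_commute _ _ hab).eq)
  · simp only [← map_mul]
    exact congrArg inl (funext fun c => ofP_triple hij hik hjk (edgeParity_triple hij hik hjk c))
  · rw [← map_mul, flipAt_mul_self, map_one]
  · rw [← map_mul, ← map_mul, (flipAt_commute i j).eq]
  · have := inr_mul_inl_mul_inr_inv (σ := flipAt i * flipAt j)
      (edgeLetter_flipAt_flipAt ⟨(i, j), hij⟩)
    rwa [mul_inv_rev, flipAt_inv, flipAt_inv, map_mul, map_mul, ← mul_assoc] at this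
  · exact (commute_inl_inr (edgeLetter_flipAt_of_ne a hk₁ hk₂)).eq

def chiHom (n : ℕ) : G2d n →* ParityWreath n :=
  PresentedGroup.toGroup chiGen_rels

lemma chiHom_of (x : GenD n) : chiHom n (PresentedGroup.of x) = chiGen x :=
  PresentedGroup.toGroup.of _

lemma wordProd_cons (x : GenD n) (w : List (GenD n)) :
    wordProd n (x :: w) = PresentedGroup.of x * wordProd n w := by
  rw [wordProd, List.map_cons, List.prod_cons, wordProd]

lemma chiHom_wordProd_left (w : List (GenD n)) (c : Fin n → Bool) :
    (chiHom n (wordProd n w)).left c = chiWord w c := by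
  induction w generalizing c with
  | nil => rfl
  | cons x t ih =>
    rw [wordProd_cons, map_mul, chiHom_of]
    cases x with
    | inl a => rw [chiGen, left_inl_mul, ih]; rfl
    | inr i => rw [chiGen, left_inr_mul, flipAt_inv, ih]; rfl

end Chi

theorem chi_well_defined (n : ℕ) :
    ∃ χ : Hsub n → G2p n, ∀ (w : List (GenD n)) (h : wordProd n w ∈ Hsub n),
      χ ⟨wordProd n w, h⟩ = chiWord w (fun _ => false) :=
  ⟨fun β => (chiHom n β).left fun _ => false, fun w _ => chiHom_wordProd_left w _⟩
end

section
/- The map ψ : G_{n+1}^2 → G_{n,d}^2 defined on generators by ψ(a_{ij}) = a_{ij} if n+1 ∉ {i,j}, ψ(a_{i(n+1)}) = τ_i, is a well-defined group homomorphism. -/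
/-! By von Dyck's theorem it suffices to check the defining relations of `G_{n+1}^2` on the
images of the generators. Relations among indices `≤ n` become the same relations in
`G_{n,d}^2`. Those involving `n+1` become: `τ_i² = 1`; `a_{ij} τ_k = τ_k a_{ij}` (two disjoint
pairs cannot both contain `n+1`); and, from the triple relation with `k = n+1`,
`a_{ij} τ_i τ_j = τ_j τ_i a_{ij}`, which follows from `τ_i τ_j a_{ij} τ_j τ_i = a_{ij}` because
the `τ`'s are commuting involutions. -/

theorem Finset.card_quadruple_eq_four_iff {α : Type*} [DecidableEq α] {a b c d : α} :
    ({a, b, c, d} : Finset α).card = 4 ↔ a ≠ b ∧ a ≠ c ∧ a ≠ d ∧ b ≠ c ∧ b ≠ d ∧ c ≠ d := by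
  aesop (add simp Finset.card_insert_eq_ite)

theorem mul_mul_eq_of_mul_mul_conj_eq {G : Type*} [Group G] {a s t : G} (hs : s * s = 1)
    (ht : t * t = 1) (hst : t * s = s * t) (h : t * s * a * s * t = a) :
    a * t * s = s * t * a := by
  calc a * t * s
      = t * s * a * (s * (t * t) * s) := by nth_rw 1 [← h]; simp only [mul_assoc]
    _ = s * t * a := by rw [ht, mul_one, hs, mul_one, hst]

theorem GenG.castSucc_cases {n : ℕ} {motive : GenG (n + 1) → Prop}
    (castSucc : ∀ (i j : Fin n) (h : i.castSucc < j.castSucc),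
      motive ⟨(i.castSucc, j.castSucc), h⟩)
    (last : ∀ (i : Fin n) (h : i.castSucc < Fin.last n), motive ⟨(i.castSucc, Fin.last n), h⟩)
    (a : GenG (n + 1)) : motive a := by
  obtain ⟨⟨i, j⟩, h⟩ := a
  obtain ⟨i, rfl⟩ := Fin.exists_castSucc_eq.2 (Fin.ne_last_of_lt h)
  induction j using Fin.lastCases with
  | last => exact last i h
  | cast j => exact castSucc i j h

namespace G2d

open PresentedGroup

variable {n : ℕ}

theorem of_inl_mul_self (a : GenG n) : (of (.inl a) : G2d n) * of (.inl a) = 1 :=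
  one_of_mem (Or.inl ⟨a, rfl⟩)

theorem of_inl_commute {a b : GenG n}
    (h : ({a.1.1, a.1.2, b.1.1, b.1.2} : Finset (Fin n)).card = 4) :
    Commute (of (.inl a) : G2d n) (of (.inl b)) :=
  mk_eq_mk_of_mul_inv_mem (Or.inr (Or.inl ⟨a, b, h, rfl⟩))

theorem of_inl_triple {i j k : Fin n} (hij : i < j) (hik : i < k) (hjk : j < k) :
    (of (.inl ⟨(i, j), hij⟩) : G2d n) * of (.inl ⟨(i, k), hik⟩) * of (.inl ⟨(j, k), hjk⟩) =
      of (.inl ⟨(j, k), hjk⟩) * of (.inl ⟨(i, k), hik⟩) * of (.inl ⟨(i, j), hij⟩) :=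
  mk_eq_mk_of_mul_inv_mem (Or.inr (Or.inr (Or.inl ⟨i, j, k, hij, hik, hjk, rfl⟩)))

theorem of_inr_mul_self (i : Fin n) : (of (.inr i) : G2d n) * of (.inr i) = 1 :=
  one_of_mem (Or.inr (Or.inr (Or.inr (Or.inl ⟨i, rfl⟩))))

theorem of_inr_commute {i j : Fin n} (h : i ≠ j) : Commute (of (.inr i) : G2d n) (of (.inr j)) :=
  mk_eq_mk_of_mul_inv_mem (Or.inr (Or.inr (Or.inr (Or.inr (Or.inl ⟨i, j, h, rfl⟩)))))

theorem of_inr_conj_of_inl {i j : Fin n} (h : i < j) :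
    (of (.inr i) : G2d n) * of (.inr j) * of (.inl ⟨(i, j), h⟩) * of (.inr j) * of (.inr i) =
      of (.inl ⟨(i, j), h⟩) :=
  mk_eq_mk_of_mul_inv_mem (Or.inr (Or.inr (Or.inr (Or.inr (Or.inr (Or.inl ⟨i, j, h, rfl⟩))))))

theorem of_inl_commute_of_inr {a : GenG n} {k : Fin n} (h₁ : k ≠ a.1.1) (h₂ : k ≠ a.1.2) :
    Commute (of (.inl a) : G2d n) (of (.inr k)) :=
  mk_eq_mk_of_mul_inv_mem
    (Or.inr (Or.inr (Or.inr (Or.inr (Or.inr (Or.inr ⟨a, k, h₁, h₂, rfl⟩))))))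

theorem of_inl_mul_of_inr_mul_of_inr {i j : Fin n} (h : i < j) :
    (of (.inl ⟨(i, j), h⟩) : G2d n) * of (.inr i) * of (.inr j) =
      of (.inr j) * of (.inr i) * of (.inl ⟨(i, j), h⟩) :=
  mul_mul_eq_of_mul_mul_conj_eq (of_inr_mul_self j) (of_inr_mul_self i)
    (of_inr_commute h.ne) (of_inr_conj_of_inl h)

end G2d

section Psi

open PresentedGroup

def psiGen (n : ℕ) (a : GenG (n + 1)) : G2d n :=
  have hi : a.1.1 ≠ Fin.last n := Fin.ne_last_of_lt a.2
  if hj : a.1.2 = Fin.last n then of (.inr (a.1.1.castPred hi))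
  else of (.inl ⟨(a.1.1.castPred hi, a.1.2.castPred hj),
    (Fin.castPred_lt_castPred_iff (hi := hi) (hj := hj)).2 a.2⟩)

variable {n : ℕ}

@[simp]
theorem psiGen_castSucc_castSucc {i j : Fin n} (h : i.castSucc < j.castSucc) :
    psiGen n ⟨(i.castSucc, j.castSucc), h⟩ =
      of (.inl ⟨(i, j), Fin.castSucc_lt_castSucc_iff.1 h⟩) := by
  simp [psiGen]

@[simp]
theorem psiGen_castSucc_last {i : Fin n} (h : i.castSucc < Fin.last n) :
    psiGen n ⟨(i.castSucc, Fin.last n), h⟩ = of (.inr i) := by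
  simp [psiGen]

theorem psiGen_mul_self (a : GenG (n + 1)) : psiGen n a * psiGen n a = 1 := by
  induction a using GenG.castSucc_cases with
  | castSucc i j h => simpa using G2d.of_inl_mul_self _
  | last i h => simpa using G2d.of_inr_mul_self i

theorem psiGen_commute {a b : GenG (n + 1)}
    (h : ({a.1.1, a.1.2, b.1.1, b.1.2} : Finset (Fin (n + 1))).card = 4) :
    Commute (psiGen n a) (psiGen n b) := by
  induction a using GenG.castSucc_cases with
  | castSucc i j hij =>
    induction b using GenG.castSucc_cases with
    | castSucc k l hkl =>
      simp only [Finset.card_quadruple_eq_four_iff, ne_eq, Fin.castSucc_inj] at h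
      simpa using G2d.of_inl_commute (Finset.card_quadruple_eq_four_iff.2 h)
    | last k hk =>
      simp only [Finset.card_quadruple_eq_four_iff, ne_eq, Fin.castSucc_inj] at h
      obtain ⟨-, hik, -, hjk, -, -⟩ := h
      simpa using G2d.of_inl_commute_of_inr (Ne.symm hik) (Ne.symm hjk)
  | last i hi =>
    induction b using GenG.castSucc_cases with
    | castSucc k l hkl =>
      simp only [Finset.card_quadruple_eq_four_iff, ne_eq, Fin.castSucc_inj] at h
      obtain ⟨-, hik, hil, -, -, -⟩ := h
      simpa using (G2d.of_inl_commute_of_inr hik hil).symm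
    | last k hk =>
      obtain ⟨-, -, -, -, hlast, -⟩ := Finset.card_quadruple_eq_four_iff.1 h
      exact absurd rfl hlast

theorem psiGen_triple {i j k : Fin (n + 1)} (hij : i < j) (hik : i < k) (hjk : j < k) :
    psiGen n ⟨(i, j), hij⟩ * psiGen n ⟨(i, k), hik⟩ * psiGen n ⟨(j, k), hjk⟩ =
      psiGen n ⟨(j, k), hjk⟩ * psiGen n ⟨(i, k), hik⟩ * psiGen n ⟨(i, j), hij⟩ := by
  obtain ⟨i, rfl⟩ := Fin.exists_castSucc_eq.2 (Fin.ne_last_of_lt hij)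
  obtain ⟨j, rfl⟩ := Fin.exists_castSucc_eq.2 (Fin.ne_last_of_lt hjk)
  induction k using Fin.lastCases with
  | last => simpa using G2d.of_inl_mul_of_inr_mul_of_inr (Fin.castSucc_lt_castSucc_iff.1 hij)
  | cast k => simpa using G2d.of_inl_triple _ _ _

theorem lift_psiGen_eq_one_of_mem_relsG {r : FreeGroup (GenG (n + 1))} (hr : r ∈ relsG (n + 1)) :
    FreeGroup.lift (psiGen n) r = 1 := by
  rcases hr with ⟨a, rfl⟩ | ⟨a, b, h, rfl⟩ | ⟨i, j, k, hij, hik, hjk, rfl⟩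
  all_goals simp only [map_mul, map_inv, FreeGroup.lift_apply_of, mul_inv_eq_one]
  · exact psiGen_mul_self a
  · exact psiGen_commute h
  · exact psiGen_triple hij hik hjk

end Psi

theorem psi_well_defined (n : ℕ) :
    ∃ ψ : G2 (n+1) →* G2d n,
      (∀ (i j : Fin n) (hij : i < j),
        ψ (PresentedGroup.of ⟨(i.castSucc, j.castSucc), Fin.castSucc_lt_castSucc_iff.mpr hij⟩) =
          PresentedGroup.of (Sum.inl ⟨(i,j),hij⟩)) ∧
      (∀ i : Fin n,
        ψ (PresentedGroup.of ⟨(i.castSucc, Fin.last n), Fin.castSucc_lt_last i⟩) =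
          PresentedGroup.of (Sum.inr i)) :=
  ⟨PresentedGroup.toGroup fun _ => lift_psiGen_eq_one_of_mem_relsG, fun _ _ _ => by simp, fun _ => by simp⟩
end
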